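/- arXiv:2001.11060 — 2 statements merged into one kernel-verified Lean document; each statement's English description precedes it below -/
import Mathlib

section
/- Representation of finite nuclear implicative semilattices: let A be a finite implicative semilattice with nucleus j. Let P be the set of meet-prime elements of A ordered by x ⊑ y iff y ≤ x (the dual of the induced order), and let S = {x ∈ P | j x = x}. Define α(a) = {x ∈ P | ¬(a ≤ x)}. Then: (i) each α(a) is an upward-closed subset of (P, ⊑); (ii) α is a bijection from A onto the upward-closed subsets of (P, ⊑); (iii) α(⊤) = P and α(a ⊓ b) = α(a) ∩ α(b); (iv) α(a ⇨ b) = {x ∈ P | ∀ y, x ⊑ y → y ∈ α(a) → y ∈ α(b)}; (v) α(j a) = j_S(α(a)), where j_S U = {x ∈ P | ∀ y, x ⊑ y → y ∈ S → y ∈ U}. -/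
/-!
A finite implicative semilattice is a lattice (joins are meets of upper bounds), distributive by
residuation. Everything rests on one separation principle: if `F` is a filter and `j b ∉ F`,
a maximal `j`-fixed point above `b` outside `F` is meet-prime. With `j = id` and `F = ↑a` it
shows that every element is the meet of the meet-primes above it, so `α` is an order embedding;
every upset `U` is the image of the meet of the primes outside `U`. For a prime `x`, the filters
`{c | a ⇨ c ≰ x}` and `{c | c ≰ x}` give the formulas for `⇨` and for `j`.
-/

open Set Function

open Classical in
noncomputable abbrev GeneralizedHeytingAlgebra.ofFiniteResiduated {A : Type*}
    [SemilatticeInf A] [OrderTop A] [Finite A] (himp : A → A → A)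
    (hres : ∀ a b c : A, a ≤ himp b c ↔ a ⊓ b ≤ c) :
    GeneralizedHeytingAlgebra A where
  __ := ‹SemilatticeInf A›
  __ := ‹OrderTop A›
  sup a b := (toFinite {c | a ≤ c ∧ b ≤ c}).toFinset.inf id
  le_sup_left _ _ := Finset.le_inf fun _ hc => ((Finite.mem_toFinset _).1 hc).1
  le_sup_right _ _ := Finset.le_inf fun _ hc => ((Finite.mem_toFinset _).1 hc).2
  sup_le _ _ _ hac hbc := Finset.inf_le ((Finite.mem_toFinset _).2 ⟨hac, hbc⟩)
  himp := himp
  le_himp_iff := hres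

section Separation

variable {A : Type*} [GeneralizedHeytingAlgebra A] [WellFoundedGT A]

/-- If `u ⊓ v ≤ m` with `u, v ≰ m`, maximality puts `k (m ⊔ u)` and `k (m ⊔ v)` in `F`,
hence also their meet `k (m ⊔ u ⊓ v) = m`. -/
theorem Nucleus.exists_infPrime_fixed_le_notMem (k : Nucleus A) {F : Set A}
    (hF_up : IsUpperSet F) (hF_inf : InfClosed F) (hF : F.Nonempty) {b : A} (hb : k b ∉ F) :
    ∃ m, InfPrime m ∧ k m = m ∧ b ≤ m ∧ m ∉ F := by
  obtain ⟨m, ⟨hkm, hbm, hmF⟩, hmax⟩ := exists_maximal_of_wellFoundedGT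
    (fun c => k c = c ∧ b ≤ c ∧ c ∉ F) ⟨k b, k.idempotent b, k.le_apply, hb⟩
  refine ⟨m, ⟨fun hm => hmF (hm.eq_top ▸ hF_up.top_mem.2 hF), fun u v huv => ?_⟩,
    hkm, hbm, hmF⟩
  by_contra! ⟨hu, hv⟩
  have join_mem : ∀ w, ¬ w ≤ m → k (m ⊔ w) ∈ F := fun w hw => by
    by_contra hwF
    have hm_le : m ≤ k (m ⊔ w) := le_sup_left.trans k.le_apply
    exact hw (le_sup_right.trans (k.le_apply.trans
      (hmax ⟨k.idempotent _, hbm.trans hm_le, hwF⟩ hm_le)))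
  have meet_le : k (m ⊔ u) ⊓ k (m ⊔ v) ≤ m := by
    rw [← k.map_inf, ← sup_inf_left, sup_of_le_left huv, hkm]
  exact hmF (hF_up meet_le (hF_inf (join_mem u hu) (join_mem v hv)))

theorem le_of_forall_infPrime_le {a b : A} (h : ∀ m, InfPrime m → b ≤ m → a ≤ m) :
    a ≤ b := by
  by_contra hab
  obtain ⟨m, hm, -, hbm, ham⟩ := (⊥ : Nucleus A).exists_infPrime_fixed_le_notMem
    (isUpperSet_Ici a) (fun _ hc _ hd => le_inf hc hd) nonempty_Ici hab
  exact ham (h m hm hbm)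

theorem InfPrime.himp_le_iff {x : A} (hx : InfPrime x) {a b : A} :
    a ⇨ b ≤ x ↔ ∃ y, InfPrime y ∧ y ≤ x ∧ b ≤ y ∧ ¬ a ≤ y := by
  refine ⟨fun h => ?_, fun ⟨y, hy, hyx, hby, hay⟩ => ?_⟩
  · obtain ⟨m, hm, -, hbm, hmF⟩ := (⊥ : Nucleus A).exists_infPrime_fixed_le_notMem
      (F := {c | ¬ a ⇨ c ≤ x}) (fun c d hcd hc hd => hc ((himp_le_himp_left hcd).trans hd))
      (fun c hc d hd hcd => by rw [himp_inf_distrib, hx.inf_le] at hcd; tauto)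
      ⟨⊤, by simpa [himp_top] using hx.ne_top⟩ (by simpa using h)
    simp only [mem_ofPred_eq, not_not] at hmF
    exact ⟨m, hm, le_himp.trans hmF, hbm,
      fun ham => hx.ne_top (top_le_iff.1 (himp_eq_top_iff.2 ham ▸ hmF))⟩
  · exact ((hy.inf_le.1 (himp_inf_le.trans hby)).resolve_right hay).trans hyx

theorem InfPrime.nucleus_le_iff {x : A} (hx : InfPrime x) (k : Nucleus A) {a : A} :
    k a ≤ x ↔ ∃ y, InfPrime y ∧ y ≤ x ∧ k y = y ∧ a ≤ y := by
  refine ⟨fun h => ?_, fun ⟨y, _, hyx, hky, hay⟩ =>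
    (k.monotone hay).trans (hky.trans_le hyx)⟩
  obtain ⟨m, hm, hkm, ham, hmF⟩ := k.exists_infPrime_fixed_le_notMem (F := {c | ¬ c ≤ x})
    (fun c d hcd hc hd => hc (hcd.trans hd))
    (fun c hc d hd hcd => by rw [hx.inf_le] at hcd; tauto)
    ⟨⊤, fun h => hx.ne_top (top_le_iff.1 h)⟩ (by simpa using h)
  exact ⟨m, hm, not_not.1 hmF, hkm, ham⟩

end Separation

section Representation

variable {A : Type*}

def primesNotAbove [SemilatticeInf A] (a : A) : Set {x : A // InfPrime x} := {x | ¬ a ≤ x}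

section SemilatticeInf

variable [SemilatticeInf A]

theorem mem_primesNotAbove {a : A} {x : {x : A // InfPrime x}} :
    x ∈ primesNotAbove a ↔ ¬ a ≤ x := Iff.rfl

theorem isLowerSet_primesNotAbove (a : A) : IsLowerSet (primesNotAbove a) :=
  fun _ _ hyx hx hay => hx (hay.trans hyx)

theorem primesNotAbove_inf (a b : A) :
    primesNotAbove (a ⊓ b) = primesNotAbove a ∩ primesNotAbove b := by
  ext x
  simp only [mem_inter_iff, mem_primesNotAbove, x.2.inf_le, not_or]

variable [OrderTop A]

theorem primesNotAbove_top : primesNotAbove (⊤ : A) = univ :=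
  eq_univ_of_forall fun x hx => x.2.ne_top (top_le_iff.1 hx)

theorem exists_primesNotAbove_eq [Finite A] {U : Set {x : A // InfPrime x}}
    (hU : IsLowerSet U) :
    ∃ a, primesNotAbove a = U := by
  classical
  cases nonempty_fintype A
  refine ⟨(Finset.univ.filter (· ∉ U)).inf (↑), Set.ext fun x => ?_⟩
  rw [mem_primesNotAbove, x.2.finset_inf_le]
  simp only [Finset.mem_filter, Finset.mem_univ, true_and, not_exists, not_and]
  exact ⟨fun h => by_contra fun hxU => h x hxU le_rfl, fun hxU y hyU hyx => hyU (hU hyx hxU)⟩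

end SemilatticeInf

variable [GeneralizedHeytingAlgebra A] [WellFoundedGT A]

theorem primesNotAbove_subset_primesNotAbove {a b : A} :
    primesNotAbove a ⊆ primesNotAbove b ↔ a ≤ b := by
  refine ⟨fun h => le_of_forall_infPrime_le fun m hm hbm => ?_,
    fun hab x hx hbx => hx (hab.trans hbx)⟩
  by_contra ham
  exact h (show ⟨m, hm⟩ ∈ primesNotAbove a from ham) hbm

theorem primesNotAbove_injective : Injective (primesNotAbove (A := A)) := fun _ _ h =>
  le_antisymm (primesNotAbove_subset_primesNotAbove.1 h.le)
    (primesNotAbove_subset_primesNotAbove.1 h.ge)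

theorem primesNotAbove_himp (a b : A) :
    primesNotAbove (a ⇨ b) = {x : {x : A // InfPrime x} | ∀ y : {x : A // InfPrime x},
      (y : A) ≤ x → y ∈ primesNotAbove a → y ∈ primesNotAbove b} := by
  ext x
  simp only [mem_ofPred_eq, mem_primesNotAbove, x.2.himp_le_iff, Subtype.forall, not_exists,
    not_and, imp_not_comm]

theorem primesNotAbove_nucleus (k : Nucleus A) (a : A) :
    primesNotAbove (k a) = {x : {x : A // InfPrime x} | ∀ y : {x : A // InfPrime x},
      (y : A) ≤ x → k y = y → y ∈ primesNotAbove a} := by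
  ext x
  simp only [mem_ofPred_eq, mem_primesNotAbove, x.2.nucleus_le_iff, Subtype.forall, not_exists,
    not_and]

end Representation

/-- Representation of finite nuclear implicative semilattices: `α a = {x meet-prime | a ≰ x}`
is an isomorphism onto the upward-closed subsets of the set of meet-primes with the dual
order `x ⊑ y ↔ y ≤ x`, turning `⊓` into `∩`, `⇨` into Heyting implication of upsets, and
`j` into `j_S` where `S` is the set of meet-prime fixpoints of `j`. -/
theorem representation_finite_nis {A : Type*} [SemilatticeInf A] [OrderTop A] [Finite A]
    (himp : A → A → A) (hres : ∀ a b c : A, a ≤ himp b c ↔ a ⊓ b ≤ c)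
    (j : A → A) (hj_le : ∀ a : A, a ≤ j a) (hj_idem : ∀ a : A, j (j a) = j a)
    (hj_inf : ∀ a b : A, j (a ⊓ b) = j a ⊓ j b)
    (α : A → Set {x : A // InfPrime x})
    (hα : ∀ a : A, α a = {x : {x : A // InfPrime x} | ¬ a ≤ (x : A)}) :
    -- (i) each `α a` is upward closed for the order `x ⊑ y ↔ (y : A) ≤ (x : A)`
    (∀ a : A, ∀ x y : {x : A // InfPrime x}, (y : A) ≤ (x : A) → x ∈ α a → y ∈ α a) ∧
    -- (ii) `α` is a bijection onto the upward-closed subsets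
    Function.Injective α ∧
    (∀ U : Set {x : A // InfPrime x},
      (∀ x y : {x : A // InfPrime x}, (y : A) ≤ (x : A) → x ∈ U → y ∈ U) →
      ∃ a : A, α a = U) ∧
    -- (iii) `α` sends `⊤` to everything and `⊓` to `∩`
    α (⊤ : A) = Set.univ ∧
    (∀ a b : A, α (a ⊓ b) = α a ∩ α b) ∧
    -- (iv) `α` sends `⇨` to the Heyting implication of upsets
    (∀ a b : A, α (himp a b) =
      {x : {x : A // InfPrime x} | ∀ y : {x : A // InfPrime x},
        (y : A) ≤ (x : A) → y ∈ α a → y ∈ α b}) ∧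
    -- (v) `α` sends `j` to `j_S` for `S` the meet-prime fixpoints of `j`
    (∀ a : A, α (j a) =
      {x : {x : A // InfPrime x} | ∀ y : {x : A // InfPrime x},
        (y : A) ≤ (x : A) → j (y : A) = (y : A) → y ∈ α a}) := by
  let := GeneralizedHeytingAlgebra.ofFiniteResiduated himp hres
  let k : Nucleus A :=
    { toFun := j, map_inf' := hj_inf, idempotent' := fun a => (hj_idem a).le, le_apply' := hj_le }
  obtain rfl : α = primesNotAbove := funext hα
  exact ⟨fun a _ _ hyx hx => isLowerSet_primesNotAbove a hyx hx, primesNotAbove_injective,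
    fun _ hU => exists_primesNotAbove_eq (fun x y => hU x y), primesNotAbove_top,
    primesNotAbove_inf, primesNotAbove_himp, primesNotAbove_nucleus k⟩
end

section
/- Let A be a bounded implicative semilattice (with least element ⊥) with a locally dense nucleus j, i.e. j (j ⊥ ⇨ ⊥) = ⊤, and suppose A is generated by the empty set, i.e. the smallest subset of A containing ⊤ and ⊥ and closed under ⊓, ⇨, and j is all of A. Then every element of A equals one of ⊥, j ⊥, j ⊥ ⇨ ⊥, ⊤; in particular A has at most 4 elements. (The free 0-generated locally dense bounded nuclear implicative semilattice has exactly these 4 elements.) -/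
/-!
Write `b := j ⊥` and `¬x := x ⇨ ⊥`. Applying `j` to `¬¬b ⊓ ¬b = ⊥` and using local density
`j ¬b = ⊤` gives `¬¬b ≤ j ⊥ = b`, so `b` is regular. Then `{⊥, b, ¬b, ⊤}` is the four-element
Boolean algebra with complementary atoms `b` and `¬b`: it is closed under `⊓`, `⇨` and `j`
(`j ¬b = ⊤`), hence it is all of `A`.
-/

theorem le_map_bot_of_inf_eq_bot {A : Type*} [SemilatticeInf A] [OrderTop A] [OrderBot A]
    {j : A → A} (hj_le : ∀ a : A, a ≤ j a) (hj_inf : ∀ a b : A, j (a ⊓ b) = j a ⊓ j b) {x y : A}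
    (hy : j y = ⊤) (hxy : x ⊓ y = ⊥) : x ≤ j ⊥ :=
  calc x ≤ j x := hj_le x
    _ = j (x ⊓ y) := by rw [hj_inf, hy, inf_top_eq]
    _ = j ⊥ := by rw [hxy]

/-- `himp` is the implication of an implicative semilattice structure on `A`. -/
def IsResiduation {A : Type*} [SemilatticeInf A] (himp : A → A → A) : Prop :=
  ∀ a b c : A, a ≤ himp b c ↔ a ⊓ b ≤ c

namespace IsResiduation

variable {A : Type*} [SemilatticeInf A] {himp : A → A → A}

theorem himp_inf_le (h : IsResiduation himp) (x y : A) : himp x y ⊓ x ≤ y :=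
  (h _ x y).1 le_rfl

theorem le_himp_himp (h : IsResiduation himp) (x y : A) : x ≤ himp (himp x y) y :=
  (h x _ y).2 (inf_comm x _ ▸ h.himp_inf_le x y)

theorem himp_idem (h : IsResiduation himp) (x y : A) : himp x (himp x y) = himp x y := by
  refine le_antisymm ((h _ x y).2 ?_) ((h _ x _).2 inf_le_left)
  calc himp x (himp x y) ⊓ x ≤ himp x y ⊓ x := le_inf (h.himp_inf_le x _) inf_le_right
    _ ≤ y := h.himp_inf_le x y

section OrderTop

variable [OrderTop A]

theorem himp_eq_top_iff (h : IsResiduation himp) {x y : A} : himp x y = ⊤ ↔ x ≤ y := by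
  rw [← top_le_iff, h, top_inf_eq]

theorem himp_self (h : IsResiduation himp) (x : A) : himp x x = ⊤ :=
  h.himp_eq_top_iff.2 le_rfl

theorem himp_top (h : IsResiduation himp) (x : A) : himp x ⊤ = ⊤ :=
  h.himp_eq_top_iff.2 le_top

theorem top_himp (h : IsResiduation himp) (x : A) : himp ⊤ x = x :=
  le_antisymm (by simpa using h.himp_inf_le ⊤ x) ((h x ⊤ x).2 inf_le_left)

end OrderTop

section OrderBot

variable [OrderBot A]

theorem inf_himp_bot (h : IsResiduation himp) (x : A) : x ⊓ himp x ⊥ = ⊥ :=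
  le_bot_iff.1 (inf_comm x _ ▸ h.himp_inf_le x ⊥)

end OrderBot

section BoundedOrder

variable [OrderTop A] [OrderBot A]

theorem bot_himp (h : IsResiduation himp) (x : A) : himp ⊥ x = ⊤ :=
  h.himp_eq_top_iff.2 bot_le

theorem himp_himp_bot_map_bot (h : IsResiduation himp) {j : A → A}
    (hj_le : ∀ a : A, a ≤ j a) (hj_inf : ∀ a b : A, j (a ⊓ b) = j a ⊓ j b)
    (hdense : j (himp (j ⊥) ⊥) = ⊤) :
    himp (himp (j ⊥) ⊥) ⊥ = j ⊥ :=
  le_antisymm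
    (le_map_bot_of_inf_eq_bot hj_le hj_inf hdense (by rw [inf_comm, h.inf_himp_bot]))
    (h.le_himp_himp _ _)

variable (himp) in
def complPair (b : A) : Set A := {⊥, b, himp b ⊥, ⊤}

theorem inf_mem_complPair {b : A} (h : IsResiduation himp) {x y : A}
    (hx : x ∈ complPair himp b) (hy : y ∈ complPair himp b) : x ⊓ y ∈ complPair himp b := by
  have hb := h.inf_himp_bot b
  rcases hx with hx | hx | hx | hx <;> rcases hy with hy | hy | hy | hy <;> subst x y <;>
    simp [complPair, hb, inf_comm (himp b ⊥) b]

theorem himp_mem_complPair {b : A} (h : IsResiduation himp) (hb : himp (himp b ⊥) ⊥ = b)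
    {x y : A} (hx : x ∈ complPair himp b) (hy : y ∈ complPair himp b) :
    himp x y ∈ complPair himp b := by
  have hcb : himp (himp b ⊥) b = b := by nth_rw 2 [← hb]; rw [h.himp_idem, hb]
  rcases hx with hx | hx | hx | hx <;> rcases hy with hy | hy | hy | hy <;> subst x y <;>
    simp [complPair, h.himp_self, h.himp_top, h.top_himp, h.bot_himp, h.himp_idem, hb, hcb]

end BoundedOrder

end IsResiduation

theorem Nat.card_le_four_of_forall_eq {α : Type*} {w x y z : α}
    (h : ∀ a : α, a = w ∨ a = x ∨ a = y ∨ a = z) : Nat.card α ≤ 4 := by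
  simpa using Nat.card_le_card_of_surjective ![w, x, y, z] fun a => by
    rcases h a with rfl | rfl | rfl | rfl
    exacts [⟨0, rfl⟩, ⟨1, rfl⟩, ⟨2, rfl⟩, ⟨3, rfl⟩]

/-- The free 0-generated locally dense bounded nuclear implicative semilattice has 4
elements: if a bounded implicative semilattice with a locally dense nucleus `j`
(`j (j ⊥ ⇨ ⊥) = ⊤`) is generated by the empty set, then every element is one of
`⊥, j ⊥, j ⊥ ⇨ ⊥, ⊤`; in particular the algebra has at most 4 elements. -/
theorem free_zero_generated_locally_dense_nis {A : Type*} [SemilatticeInf A] [OrderTop A]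
    [OrderBot A]
    (himp : A → A → A) (hres : ∀ a b c : A, a ≤ himp b c ↔ a ⊓ b ≤ c)
    (j : A → A) (hj_le : ∀ a : A, a ≤ j a) (hj_idem : ∀ a : A, j (j a) = j a)
    (hj_inf : ∀ a b : A, j (a ⊓ b) = j a ⊓ j b)
    (hdense : j (himp (j ⊥) ⊥) = ⊤)
    (hgen : ∀ T : Set A, (⊤ : A) ∈ T → (⊥ : A) ∈ T →
      (∀ x ∈ T, ∀ y ∈ T, x ⊓ y ∈ T) → (∀ x ∈ T, ∀ y ∈ T, himp x y ∈ T) →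
      (∀ x ∈ T, j x ∈ T) → ∀ a : A, a ∈ T) :
    (∀ a : A, a = ⊥ ∨ a = j ⊥ ∨ a = himp (j ⊥) ⊥ ∨ a = ⊤) ∧
    Nat.card A ≤ 4 := by
  have hres : IsResiduation himp := hres
  have hreg := hres.himp_himp_bot_map_bot hj_le hj_inf hdense
  have hall : ∀ a : A, a ∈ IsResiduation.complPair himp (j ⊥) := by
    refine hgen _ (by simp [IsResiduation.complPair]) (by simp [IsResiduation.complPair])
      (fun x hx y hy => hres.inf_mem_complPair hx hy)
      (fun x hx y hy => hres.himp_mem_complPair hreg hx hy) ?_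
    have hj_top : j ⊤ = ⊤ := top_le_iff.1 (hj_le ⊤)
    rintro x (rfl | rfl | rfl | rfl) <;> simp [IsResiduation.complPair, hj_idem, hdense, hj_top]
  exact ⟨hall, Nat.card_le_four_of_forall_eq hall⟩
end
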